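/- There is a universal constant C with the following property. Let X be a bounded open convex subset of ℝ^d, let I_δ : C(X) → E_δ be an interpolation operator with constant C_I ≥ 1, let U_ε ⊆ ∂X be a boundary ε-sample with associated discretized constraint set M_ε, and let γ ≥ 2·C_I·diam(X). Assume δ ≤ ε/2, ε ≤ diam(X), and 4δγ ≤ ε². Then for every convex (γ/C_I)-Lipschitz function f on X there exists h ∈ E_δ ∩ H_{M_ε} which is γ-Lipschitz and satisfies ‖f − h‖_∞ ≤ C γ² δ diam(X)/ε²; in particular d_H(B_Lip^{γ/C_I} ∩ H | B_Lip^γ ∩ E_δ ∩ H_{M_ε}) ≤ C γ² δ diam(X)/ε². -/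

import Mathlib

open Set NNReal

noncomputable section

abbrev Esp (d : ℕ) := EuclideanSpace ℝ (Fin d)

/-- The value of the affine form `ℓ_{xyz}` on a function `g`: with `λ = ‖z−y‖/‖x−y‖`,
`ℓ_{xyz}(g) = g(z) − λ g(x) − (1−λ) g(y)`. -/
def ellVal {d : ℕ} (g : Esp d → ℝ) (x y z : Esp d) : ℝ :=
  g z - (‖z - y‖ / ‖x - y‖) * g x - (1 - ‖z - y‖ / ‖x - y‖) * g y

/-- The discrete segment `c_{pq} = {p + εi(q−p)/‖q−p‖ : i ∈ ℕ, 0 ≤ i ≤ ‖q−p‖/ε}`. -/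
def discreteSeg {d : ℕ} (ε : ℝ) (p q : Esp d) : Set (Esp d) :=
  {x | ∃ i : ℕ, (i : ℝ) ≤ ‖q - p‖ / ε ∧ x = p + ((ε * i) / ‖q - p‖) • (q - p)}

/-- `U` is an `ε`-sample of the boundary of `X`: `U ⊆ ∂X` and every point of `∂X` is within
distance `ε` of a point of `U`. -/
def IsBoundarySample {d : ℕ} (X : Set (Esp d)) (ε : ℝ) (U : Set (Esp d)) : Prop :=
  U ⊆ frontier X ∧ ∀ x ∈ frontier X, ∃ u ∈ U, ‖x - u‖ ≤ ε

/-- The data `(x, y, z)` defines a form `ℓ_{xyz}` of the discretized constraint set `M_ε`: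
`x, y, z ∈ c_{pq}` for some distinct `p, q ∈ U` and `z ∈ [x,y]`. -/
def MemMeps {d : ℕ} (ε : ℝ) (U : Set (Esp d)) (x y z : Esp d) : Prop :=
  ∃ p ∈ U, ∃ q ∈ U, p ≠ q ∧ x ∈ discreteSeg ε p q ∧ y ∈ discreteSeg ε p q ∧
    z ∈ discreteSeg ε p q ∧ x ≠ y ∧ z ∈ segment ℝ x y

/-- `g` belongs to `H_{M_ε}`, i.e. `ℓ(g) ≤ 0` for every form `ℓ ∈ M_ε`. -/
def SatisfiesMeps {d : ℕ} (ε : ℝ) (U : Set (Esp d)) (g : Esp d → ℝ) : Prop :=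
  ∀ x y z : Esp d, MemMeps ε U x y z → ellVal g x y z ≤ 0

/-- An interpolation operator `I_δ : C(X) → E_δ` with constant `C_I`: a continuous linear
map onto a finite-dimensional subspace `E_δ` of `C(X)` containing the affine functions,
restricting to the identity on `E_δ`, and satisfying (L1), (L2), (L3). -/
structure InterpOp (d : ℕ) (X : Set (Esp d)) (δ CI : ℝ) where
  /-- the finite-dimensional subspace `E_δ ⊆ C(X)` -/
  E : Submodule ℝ (Esp d → ℝ)
  findim : FiniteDimensional ℝ E
  contE : ∀ f ∈ E, ContinuousOn f (closure X)
  /-- the (linear) interpolation operator -/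
  I : (Esp d → ℝ) →ₗ[ℝ] (Esp d → ℝ)
  mem_E : ∀ f, I f ∈ E
  /-- continuity (boundedness) of `I` with respect to the sup norm on `X` -/
  bounded : ∃ B : ℝ, ∀ (f : Esp d → ℝ) (r : ℝ), 0 ≤ r → (∀ x ∈ X, |f x| ≤ r) →
    ∀ x ∈ X, |I f x| ≤ B * r
  /-- `I` restricts to the identity on `E_δ` -/
  id_on_E : ∀ f ∈ E, I f = f
  /-- `E_δ` contains the affine functions -/
  affine_mem : ∀ (v : Esp d) (c : ℝ), (fun x => (inner ℝ v x : ℝ) + c) ∈ E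
  /-- (L1): `Lip(I_δ f) ≤ C_I Lip(f)` -/
  lip1 : ∀ (f : Esp d → ℝ) (L : ℝ≥0), LipschitzOnWith L f X →
    LipschitzOnWith (Real.toNNReal CI * L) (I f) X
  /-- (L2): `‖f − I_δ f‖_∞ ≤ δ Lip(f)` -/
  lip2 : ∀ (f : Esp d → ℝ) (L : ℝ≥0), LipschitzOnWith L f X →
    ∀ x ∈ X, |f x - I f x| ≤ δ * L
  /-- (L3): `‖f − I_δ f‖_∞ ≤ (δ²/2) Lip(∇f)` for `f` with Lipschitz gradient -/
  lip3 : ∀ (f : Esp d → ℝ) (f' : Esp d → Esp d) (L : ℝ≥0),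
    (∀ x ∈ X, HasGradientAt f (f' x) x) → LipschitzOnWith L f' X →
    ∀ x ∈ X, |f x - I f x| ≤ δ ^ 2 / 2 * L

/-! The convex `(γ/C_I)`-Lipschitz function `f` is first extended to a convex Lipschitz function
`F` on the whole space (McShane's inf-convolution), then made strongly convex without increasing
its Lipschitz constant: `g = (1 - θ) F + θ F(x₀) + μ ‖· - x₀‖²`, where shrinking `F` by `θ` pays
for the slope `2 μ diam X` of the quadratic. Every form of `M_ε` compares three points of a
discrete segment lying at mutual distance at least `ε`, so strong convexity gives
`ℓ(g) ≤ -μ ε²`, a margin larger than the error `2 δ Lip g` introduced by interpolation; hence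
`h = I_δ g` satisfies all constraints of `M_ε`. -/

section McShane

variable {α : Type*} [PseudoMetricSpace α] {X : Set α} {f : α → ℝ} {K : ℝ≥0}

def mcShaneExtension (X : Set α) (f : α → ℝ) (K : ℝ≥0) (x : α) : ℝ :=
  ⨅ w : X, f w + K * dist x w

lemma LipschitzOnWith.bddBelow_range_add_mul_dist (hf : LipschitzOnWith K f X) {w₀ : α}
    (hw₀ : w₀ ∈ X) (x : α) : BddBelow (range fun w : X => f w + K * dist x w) := by
  refine ⟨f w₀ - K * dist x w₀, ?_⟩
  rintro _ ⟨w, rfl⟩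
  calc f w₀ - K * dist x w₀ ≤ f w + K * dist w₀ w - K * dist x w₀ := by
        gcongr; exact hf.le_add_mul hw₀ w.2
    _ ≤ f w + K * dist x w := by
        have := dist_triangle_left w₀ w x
        nlinarith [K.2]

lemma mcShaneExtension_le (hf : LipschitzOnWith K f X) (x : α) {w : α} (hw : w ∈ X) :
    mcShaneExtension X f K x ≤ f w + K * dist x w :=
  ciInf_le (hf.bddBelow_range_add_mul_dist hw x) ⟨w, hw⟩

lemma mcShaneExtension_eqOn (hf : LipschitzOnWith K f X) : EqOn (mcShaneExtension X f K) f X := by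
  intro x hx
  have : Nonempty X := ⟨⟨x, hx⟩⟩
  refine le_antisymm (by simpa using mcShaneExtension_le hf x hx) ?_
  exact le_ciInf fun w => hf.le_add_mul hx w.2

lemma mcShaneExtension_lipschitzWith (hf : LipschitzOnWith K f X) (hX : X.Nonempty) :
    LipschitzWith K (mcShaneExtension X f K) := by
  have : Nonempty X := hX.to_subtype
  refine LipschitzWith.of_le_add_mul K fun x y => sub_le_iff_le_add.1 (le_ciInf fun w => ?_)
  calc mcShaneExtension X f K x - K * dist x y ≤ f w + K * dist x w - K * dist x y := by
        gcongr; exact mcShaneExtension_le hf x w.2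
    _ ≤ f w + K * dist y w := by
        have := dist_triangle x y w
        nlinarith [K.2]

end McShane

lemma convexOn_mcShaneExtension {E : Type*} [NormedAddCommGroup E] [NormedSpace ℝ E] {X : Set E}
    {f : E → ℝ} {K : ℝ≥0} (hX : Convex ℝ X) (hne : X.Nonempty) (hf : ConvexOn ℝ X f)
    (hfK : LipschitzOnWith K f X) : ConvexOn ℝ univ (mcShaneExtension X f K) := by
  have : Nonempty X := hne.to_subtype
  refine ⟨convex_univ, fun x _ y _ a b ha hb hab => ?_⟩
  have key : ∀ w₁ w₂ : X, mcShaneExtension X f K (a • x + b • y) ≤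
      a * (f w₁ + K * dist x w₁) + b * (f w₂ + K * dist y w₂) := by
    intro w₁ w₂
    have hdist : dist (a • x + b • y) (a • (w₁ : E) + b • (w₂ : E)) ≤
        a * dist x w₁ + b * dist y w₂ := by
      calc _ ≤ dist (a • x) (a • (w₁ : E)) + dist (b • y) (b • (w₂ : E)) := dist_add_add_le _ _ _ _
        _ = a * dist x w₁ + b * dist y w₂ := by
          rw [dist_smul₀, dist_smul₀, Real.norm_of_nonneg ha, Real.norm_of_nonneg hb]
    calc _ ≤ f (a • w₁ + b • w₂) + K * dist (a • x + b • y) (a • (w₁ : E) + b • (w₂ : E)) :=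
          mcShaneExtension_le hfK _ (hX w₁.2 w₂.2 ha hb hab)
      _ ≤ (a * f w₁ + b * f w₂) + K * (a * dist x w₁ + b * dist y w₂) :=
          add_le_add (hf.2 w₁.2 w₂.2 ha hb hab) (mul_le_mul_of_nonneg_left hdist K.2)
      _ = _ := by ring
  simp only [smul_eq_mul, mcShaneExtension, Real.mul_iInf_of_nonneg ha,
    Real.mul_iInf_of_nonneg hb]
  rw [← sub_le_iff_le_add]
  refine le_ciInf fun w₁ => ?_
  rw [sub_le_iff_le_add, ← sub_le_iff_le_add']
  exact le_ciInf fun w₂ => sub_le_iff_le_add'.2 (key w₁ w₂)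

section DiscreteSegment

variable {d : ℕ} {ε : ℝ} {p q x y : Esp d}

lemma discreteSeg_subset_segment (hε : 0 < ε) : discreteSeg ε p q ⊆ segment ℝ p q := by
  rintro _ ⟨i, hi, rfl⟩
  have ht : ε * i / ‖q - p‖ ≤ 1 :=
    div_le_one_of_le₀ ((le_div_iff₀' hε).1 hi) (norm_nonneg _)
  exact ⟨1 - ε * i / ‖q - p‖, ε * i / ‖q - p‖, sub_nonneg.2 ht, by positivity, by ring, by module⟩

lemma le_norm_sub_of_mem_discreteSeg (hx : x ∈ discreteSeg ε p q) (hy : y ∈ discreteSeg ε p q)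
    (hxy : x ≠ y) : ε ≤ ‖x - y‖ := by
  obtain ⟨i, -, rfl⟩ := hx
  obtain ⟨j, -, rfl⟩ := hy
  have hij : (i : ℤ) - j ≠ 0 := sub_ne_zero.2 fun h => hxy (by rw [Nat.cast_inj.1 h])
  have hqp : ‖q - p‖ ≠ 0 := fun h => hxy (by simp [h])
  have hdiff : p + (ε * i / ‖q - p‖) • (q - p) - (p + (ε * j / ‖q - p‖) • (q - p)) =
      (ε * ((i : ℤ) - j : ℤ) / ‖q - p‖) • (q - p) := by
    push_cast; module
  have hone : (1 : ℝ) ≤ |(((i : ℤ) - j : ℤ) : ℝ)| := by exact_mod_cast Int.one_le_abs hij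
  rw [hdiff, norm_smul, norm_div, norm_mul, norm_norm, div_mul_cancel₀ _ hqp, Real.norm_eq_abs,
    Real.norm_eq_abs]
  exact (le_abs_self ε).trans (le_mul_of_one_le_right (abs_nonneg ε) hone)

end DiscreteSegment

lemma ellVal_smul_add_smul {d : ℕ} (g : Esp d → ℝ) {x y : Esp d} (hxy : x ≠ y) {a b : ℝ}
    (ha : 0 ≤ a) (hab : a + b = 1) :
    ellVal g x y (a • x + b • y) = g (a • x + b • y) - a * g x - b * g y := by
  obtain rfl : b = 1 - a := by linarith
  have hratio : ‖a • x + (1 - a) • y - y‖ / ‖x - y‖ = a := by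
    rw [show a • x + (1 - a) • y - y = a • (x - y) by module, norm_smul, Real.norm_of_nonneg ha,
      mul_div_assoc, div_self (norm_ne_zero_iff.2 (sub_ne_zero.2 hxy)), mul_one]
  rw [ellVal, hratio]

lemma sq_le_mul_mul_norm_sq_of_mem_discreteSeg {d : ℕ} {ε a : ℝ} {p q x y : Esp d}
    (hε : 0 ≤ ε) (hx : x ∈ discreteSeg ε p q) (hy : y ∈ discreteSeg ε p q)
    (hz : a • x + (1 - a) • y ∈ discreteSeg ε p q) (hxy : x ≠ y) (ha0 : 0 < a) (ha1 : a < 1) :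
    ε ^ 2 ≤ a * (1 - a) * ‖x - y‖ ^ 2 := by
  have hsep : ∀ u ∈ discreteSeg ε p q, ∀ v ∈ discreteSeg ε p q, 0 < ‖u - v‖ → ε ≤ ‖u - v‖ :=
    fun u hu v hv hpos => le_norm_sub_of_mem_discreteSeg hu hv (norm_pos_iff.1 hpos ∘ sub_eq_zero.2)
  have hzy : ‖a • x + (1 - a) • y - y‖ = a * ‖x - y‖ := by
    rw [show a • x + (1 - a) • y - y = a • (x - y) by module, norm_smul, Real.norm_of_nonneg ha0.le]
  have hzx : ‖a • x + (1 - a) • y - x‖ = (1 - a) * ‖x - y‖ := by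
    rw [show a • x + (1 - a) • y - x = (1 - a) • (y - x) by module, norm_smul,
      Real.norm_of_nonneg (by linarith), norm_sub_rev]
  have hxy0 : 0 < ‖x - y‖ := norm_pos_iff.2 (sub_ne_zero.2 hxy)
  have hεa : ε ≤ a * ‖x - y‖ := hzy ▸ hsep _ hz _ hy (hzy ▸ by positivity)
  have hεb : ε ≤ (1 - a) * ‖x - y‖ := hzx ▸ hsep _ hz _ hx (hzx ▸ mul_pos (by linarith) hxy0)
  nlinarith [mul_le_mul hεa hεb hε (by positivity)]

lemma satisfiesMeps_of_strongConvexOn {d : ℕ} {ε μ η : ℝ} {U K : Set (Esp d)} {g h : Esp d → ℝ}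
    (hε : 0 < ε) (hK : Convex ℝ K) (hUK : U ⊆ K) (hg : StrongConvexOn K (2 * μ) g)
    (hgh : ∀ w ∈ K, |g w - h w| ≤ η) (hη : 2 * η ≤ μ * ε ^ 2) : SatisfiesMeps ε U h := by
  rintro x y z ⟨p, hp, q, hq, -, hx, hy, hz, hxy, a, b, ha, hb, hab, rfl⟩
  have hseg : discreteSeg ε p q ⊆ K :=
    (discreteSeg_subset_segment hε).trans (hK.segment_subset (hUK hp) (hUK hq))
  have hxK := hseg hx
  have hyK := hseg hy
  have hzK := hseg hz
  have hstrong := hg.2 hxK hyK ha hb hab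
  rw [ellVal_smul_add_smul h hxy ha hab]
  obtain rfl : b = 1 - a := by linarith
  rcases ha.eq_or_lt with rfl | ha0
  · simp
  rcases hb.eq_or_lt with hb0 | hb0
  · obtain rfl : a = 1 := by linarith
    simp
  have hμ : 0 ≤ μ := by
    have hη0 : 0 ≤ η := (abs_nonneg _).trans (hgh x hxK)
    by_contra! hμ
    nlinarith [pow_pos hε 2]
  have hgap : μ * ε ^ 2 ≤ μ * (a * (1 - a) * ‖x - y‖ ^ 2) := by
    gcongr
    exact sq_le_mul_mul_norm_sq_of_mem_discreteSeg hε.le hx hy hz hxy ha0 (by linarith)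
  have hx' := abs_le.1 (hgh x hxK)
  have hy' := abs_le.1 (hgh y hyK)
  have hz' := abs_le.1 (hgh _ hzK)
  simp only [smul_eq_mul] at hstrong
  linarith [mul_le_mul_of_nonneg_left hx'.2 ha, mul_le_mul_of_nonneg_left hy'.2 hb]

lemma abs_dist_sq_sub_dist_sq_le {α : Type*} [PseudoMetricSpace α] {a b c : α} {R : ℝ}
    (ha : dist a c ≤ R) (hb : dist b c ≤ R) :
    |dist a c ^ 2 - dist b c ^ 2| ≤ 2 * R * dist a b := by
  rw [sq_sub_sq, abs_mul, abs_of_nonneg (by positivity)]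
  exact mul_le_mul (by linarith) (abs_dist_sub_le a b c) (abs_nonneg _)
    (by linarith [dist_nonneg (x := a) (y := c)])

section QuadraticRegularization

variable {E : Type*} [NormedAddCommGroup E] {F : E → ℝ} {x₀ : E} {θ μ : ℝ}

def quadraticRegularization (F : E → ℝ) (x₀ : E) (θ μ : ℝ) (x : E) : ℝ :=
  (1 - θ) * F x + θ * F x₀ + μ * ‖x - x₀‖ ^ 2

lemma strongConvexOn_quadraticRegularization [InnerProductSpace ℝ E] (hF : ConvexOn ℝ univ F)
    (hθ : θ ≤ 1) :
    StrongConvexOn univ (2 * μ) (quadraticRegularization F x₀ θ μ) := by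
  rw [strongConvexOn_iff_convex]
  have haff : (fun x => quadraticRegularization F x₀ θ μ x - 2 * μ / 2 * ‖x‖ ^ 2) =
      fun x => (1 - θ) • F x + ((θ * F x₀ + μ * ‖x₀‖ ^ 2) + innerSL ℝ ((-2 * μ) • x₀) x) := by
    funext x
    simp only [quadraticRegularization, norm_sub_sq_real, innerSL_apply_apply,
      real_inner_smul_right, real_inner_comm x, smul_eq_mul]
    ring
  rw [haff]
  exact (hF.smul (sub_nonneg.2 hθ)).add ((convexOn_const _ convex_univ).add
    ((innerSL ℝ ((-2 * μ) • x₀)).toLinearMap.convexOn convex_univ))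

lemma lipschitzOnWith_quadraticRegularization {K : ℝ≥0} {S : Set E} {R : ℝ}
    (hF : LipschitzWith K F) (hθ1 : θ ≤ 1) (hμ : 0 ≤ μ) (hS : S ⊆ Metric.closedBall x₀ R)
    (hslope : 2 * μ * R ≤ θ * K) : LipschitzOnWith K (quadraticRegularization F x₀ θ μ) S := by
  refine LipschitzOnWith.of_dist_le_mul fun a ha b hb => ?_
  have hsq := abs_dist_sq_sub_dist_sq_le (hS ha) (hS hb)
  have hFab := hF.dist_le_mul a b
  rw [Real.dist_eq] at hFab ⊢
  have hdiff : quadraticRegularization F x₀ θ μ a - quadraticRegularization F x₀ θ μ b =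
      (1 - θ) * (F a - F b) + μ * (dist a x₀ ^ 2 - dist b x₀ ^ 2) := by
    simp only [quadraticRegularization, dist_eq_norm]; ring
  calc _ ≤ |(1 - θ) * (F a - F b)| + |μ * (dist a x₀ ^ 2 - dist b x₀ ^ 2)| :=
        hdiff ▸ abs_add_le _ _
    _ = (1 - θ) * |F a - F b| + μ * |dist a x₀ ^ 2 - dist b x₀ ^ 2| := by
        rw [abs_mul, abs_mul, abs_of_nonneg (sub_nonneg.2 hθ1), abs_of_nonneg hμ]
    _ ≤ (1 - θ) * (K * dist a b) + μ * (2 * R * dist a b) := by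
        gcongr
    _ ≤ K * dist a b := by
        linarith [mul_le_mul_of_nonneg_right hslope (dist_nonneg (x := a) (y := b))]

lemma abs_sub_quadraticRegularization_le {K : ℝ≥0} {R : ℝ} {x : E} (hF : LipschitzWith K F)
    (hθ : 0 ≤ θ) (hμ : 0 ≤ μ) (hx : dist x x₀ ≤ R) :
    |F x - quadraticRegularization F x₀ θ μ x| ≤ θ * K * R + μ * R ^ 2 := by
  have hdiff : F x - quadraticRegularization F x₀ θ μ x =
      θ * (F x - F x₀) - μ * dist x x₀ ^ 2 := by
    simp only [quadraticRegularization, dist_eq_norm]; ring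
  have hFx := hF.dist_le_mul x x₀
  rw [Real.dist_eq] at hFx
  calc _ ≤ |θ * (F x - F x₀)| + |μ * dist x x₀ ^ 2| := hdiff ▸ abs_sub _ _
    _ = θ * |F x - F x₀| + μ * dist x x₀ ^ 2 := by
        rw [abs_mul, abs_of_nonneg hθ, abs_of_nonneg (by positivity : 0 ≤ μ * dist x x₀ ^ 2)]
    _ ≤ θ * (K * R) + μ * R ^ 2 := by
        gcongr
        exact hFx.trans (by gcongr)
    _ = θ * K * R + μ * R ^ 2 := by ring

end QuadraticRegularization

namespace InterpOp

variable {d : ℕ} {X : Set (Esp d)} {δ CI : ℝ} (op : InterpOp d X δ CI)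

lemma abs_sub_I_le_of_mem_closure {g : Esp d → ℝ} {K : ℝ≥0} (hgK : LipschitzOnWith K g X)
    (hgc : ContinuousOn g (closure X)) {w : Esp d} (hw : w ∈ closure X) :
    |g w - op.I g w| ≤ δ * K :=
  le_on_closure (fun x hx => op.lip2 g K hgK x hx)
    (hgc.sub (op.contE _ (op.mem_E g))).abs continuousOn_const hw

theorem exists_approx_of_convexOn (hX : Convex ℝ X) {ε : ℝ} (hε : 0 < ε) {U : Set (Esp d)}
    (hU : U ⊆ closure X) {x₀ : Esp d} (hx₀ : x₀ ∈ X) {R : ℝ} (hR : X ⊆ Metric.closedBall x₀ R)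
    {f : Esp d → ℝ} {K : ℝ≥0} (hf : ConvexOn ℝ X f) (hfK : LipschitzOnWith K f X) {θ μ : ℝ}
    (hθ0 : 0 ≤ θ) (hθ1 : θ ≤ 1) (hμ : 0 ≤ μ) (hslope : 2 * μ * R ≤ θ * K)
    (hslack : 2 * (δ * K) ≤ μ * ε ^ 2) :
    ∃ h ∈ op.E, SatisfiesMeps ε U h ∧ LipschitzOnWith (Real.toNNReal CI * K) h X ∧
      ∀ x ∈ X, |f x - h x| ≤ θ * K * R + μ * R ^ 2 + δ * K := by
  set F := mcShaneExtension X f K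
  have hFK : LipschitzWith K F := mcShaneExtension_lipschitzWith hfK ⟨x₀, hx₀⟩
  set g := quadraticRegularization F x₀ θ μ
  have hgK : LipschitzOnWith K g X :=
    lipschitzOnWith_quadraticRegularization hFK hθ1 hμ hR hslope
  have hgc : Continuous g := by
    have := hFK.continuous
    unfold g quadraticRegularization
    fun_prop
  have hg : StrongConvexOn (closure X) (2 * μ) g := by
    have := strongConvexOn_quadraticRegularization (x₀ := x₀) (μ := μ)
      (convexOn_mcShaneExtension hX ⟨x₀, hx₀⟩ hf hfK) hθ1
    exact ⟨hX.closure, fun x _ y _ => this.2 (mem_univ x) (mem_univ y)⟩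
  refine ⟨op.I g, op.mem_E g, satisfiesMeps_of_strongConvexOn hε hX.closure hU hg
    (fun w hw => op.abs_sub_I_le_of_mem_closure hgK hgc.continuousOn hw) hslack,
    op.lip1 g K hgK, fun x hx => ?_⟩
  calc |f x - op.I g x| ≤ |F x - g x| + |g x - op.I g x| := by
        rw [← mcShaneExtension_eqOn hfK hx]; exact abs_sub_le _ _ _
    _ ≤ θ * K * R + μ * R ^ 2 + δ * K :=
        add_le_add (abs_sub_quadraticRegularization_le hFK hθ0 hμ (hR hx)) (op.lip2 g K hgK x hx)

end InterpOp

/-- There is a universal constant `C` such that: for every bounded open convex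
`X ⊆ ℝ^d`, interpolation operator `I_δ : C(X) → E_δ` with constant `C_I ≥ 1`, boundary
`ε`-sample `U_ε ⊆ ∂X` with constraint set `M_ε`, and `γ ≥ 2 C_I diam(X)`, if `δ ≤ ε/2`,
`ε ≤ diam(X)` and `4δγ ≤ ε²`, then for every convex `(γ/C_I)`-Lipschitz `f` on `X` there
is `h ∈ E_δ ∩ H_{M_ε}`, `γ`-Lipschitz, with `‖f − h‖_∞ ≤ C γ² δ diam(X)/ε²`; in particular
`d_H(B_Lip^{γ/C_I} ∩ H | B_Lip^γ ∩ E_δ ∩ H_{M_ε}) ≤ C γ² δ diam(X)/ε²`. -/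
theorem stmt2 : ∃ C : ℝ, 0 < C ∧
    ∀ (d : ℕ) (X : Set (Esp d)), Convex ℝ X → IsOpen X → Bornology.IsBounded X →
    ∀ δ CI ε γ : ℝ, 0 < δ → 1 ≤ CI → 0 < ε →
    ∀ op : InterpOp d X δ CI, ∀ U : Set (Esp d), IsBoundarySample X ε U →
    2 * CI * Metric.diam X ≤ γ → δ ≤ ε / 2 → ε ≤ Metric.diam X → 4 * δ * γ ≤ ε ^ 2 →
    ∀ f : Esp d → ℝ, ConvexOn ℝ X f → LipschitzOnWith (Real.toNNReal (γ / CI)) f X →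
    ∃ h : Esp d → ℝ, h ∈ op.E ∧ SatisfiesMeps ε U h ∧
      LipschitzOnWith (Real.toNNReal γ) h X ∧
      ∀ x ∈ X, |f x - h x| ≤ C * γ ^ 2 * δ * Metric.diam X / ε ^ 2 := by
  refine ⟨7, by norm_num, fun d X hX _ hXb δ CI ε γ hδ hCI hε op U hU hγ _ hεD hδγ f hf hfL => ?_⟩
  obtain ⟨x₀, hx₀⟩ : X.Nonempty := nonempty_iff_ne_empty.2 fun h => by
    simp only [h, Metric.diam_empty] at hεD; linarith
  have hD : 0 < Metric.diam X := hε.trans_le hεD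
  have hCI0 : 0 < CI := one_pos.trans_le hCI
  have hγ0 : 0 < γ := (by positivity : 0 < 2 * CI * Metric.diam X).trans_le hγ
  have hK : (Real.toNNReal (γ / CI) : ℝ) = γ / CI := Real.coe_toNNReal _ (by positivity)
  have hθ1 : 8 * δ * Metric.diam X / ε ^ 2 ≤ 1 := by
    rw [div_le_one (by positivity)]; nlinarith
  -- with `D = diam X` and `K = γ / C_I`, the choice `θ = 8 δ D / ε²`, `μ = 4 δ γ / (C_I ε²)`
  -- gives `θ K = 2 μ D` and `μ ε² = 4 δ K`
  obtain ⟨h, hE, hM, hLip, herr⟩ := op.exists_approx_of_convexOn hX hε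
    (hU.1.trans frontier_subset_closure) hx₀ (fun x hx => Metric.dist_le_diam_of_mem hXb hx hx₀)
    hf hfL (by positivity) hθ1 (μ := 4 * δ * γ / (CI * ε ^ 2)) (by positivity)
    (le_of_eq (by rw [hK]; field_simp; ring)) (by rw [hK]; field_simp; nlinarith)
  refine ⟨h, hE, hM, ?_, fun x hx => (herr x hx).trans ?_⟩
  · rwa [← Real.toNNReal_mul hCI0.le, mul_div_cancel₀ _ hCI0.ne'] at hLip
  -- the error is `(12 D² + ε²) δ γ / (C_I ε²) ≤ 13 D² δ γ / (C_I ε²)`, and `13 D ≤ 7 C_I γ`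
  have h13 : 13 * Metric.diam X ≤ 7 * CI * γ := by nlinarith
  rw [hK]
  calc _ = (12 * Metric.diam X ^ 2 + ε ^ 2) * (δ * γ) / (CI * ε ^ 2) := by field_simp; ring
    _ ≤ 13 * Metric.diam X ^ 2 * (δ * γ) / (CI * ε ^ 2) := by gcongr; nlinarith
    _ ≤ 7 * γ ^ 2 * δ * Metric.diam X / ε ^ 2 := by
        rw [div_le_div_iff₀ (by positivity) (by positivity)]
        nlinarith [mul_le_mul_of_nonneg_left h13
          (by positivity : 0 ≤ δ * γ * Metric.diam X * ε ^ 2)]
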